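/- The truncated sl₂ projector satisfies the recursion e·p_m(s) = (q^{−h−2}[s−1]_q/[h+s−1]_q)·p_{m−1}(s−1)·e + f^m e^{m+1} (−1)^m q^{m(s−1)}/([m]_q! ∏_{i=1}^m [h+s+i]_q), as operators on any U_q(sl₂)-module weight space where all Cartan denominators are invertible. -/

import Mathlib

/-- `[z]_q = (q^z - q^{-z})/(q - q⁻¹)` with `q^z := exp(z log q)`. -/
noncomputable def qnum (q z : ℂ) : ℂ :=
  (Complex.exp (z * Complex.log q) - Complex.exp (-z * Complex.log q)) / (q - q⁻¹)

/-- `q^z := exp(z log q)`. -/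
noncomputable def qpow (q z : ℂ) : ℂ := Complex.exp (z * Complex.log q)

/-- The truncated shifted extremal projector
`p_m(s) = Σ_{k=0}^m f^k e^k (-1)^k q^{k(s-1)}/([k]_q! ∏_{i=1}^k [h+s+i]_q)`
applied to a vector of `h`-eigenvalue `b`. -/
noncomputable def truncProj (q : ℂ) {M : Type*} [AddCommGroup M] [Module ℂ M]
    (E F : Module.End ℂ M) (m : ℕ) (s b : ℂ) (w : M) : M :=
  ∑ k ∈ Finset.range (m + 1),
    (((-1 : ℂ) ^ k * qpow q (k * (s - 1))) /
        ((∏ i ∈ Finset.Icc 1 k, qnum q i) *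
         (∏ i ∈ Finset.Icc 1 k, qnum q (b + s + i)))) •
      ((F ^ k) ((E ^ k) w))

/-!
On a weight vector `v` with `K v = q^c • v` one has
`e f^{k+1} v = f^{k+1} e v + [k+1]_q [c-k]_q f^k v`, by induction on `k`. Applied to the terms
`c_k f^k e^k w` of `p_m(s) w` (where `w` has weight `a`), this writes `e p_m(s) w` as a combination
of the vectors `f^j e^{j+1} w`. For `j < m` the coefficient is `c_j + c_{j+1} [j+1]_q [a+j+2]_q`,
which the identity `[x+y]_q - q^y [x]_q = q^{-x} [y]_q` (at `x = a+j+2`, `y = s-1`) turns into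
`q^{-a-2} [s-1]_q / [a+s+1]_q` times the `j`-th coefficient of `p_{m-1}(s-1)` at weight `a+2`;
the top vector `f^m e^{m+1} w` keeps its coefficient `c_m`.
-/

open Finset

section QBracket

variable {𝕜 : Type*} [Field 𝕜]

/-- The `q`-number in multiplicative form: `[z]_q = qbracket q (q ^ z)`. -/
def qbracket (q x : 𝕜) : 𝕜 := (x - x⁻¹) / (q - q⁻¹)

lemma sub_inv_ne_zero_of_sq_ne_one {x : 𝕜} (hx0 : x ≠ 0) (hx : x ^ 2 ≠ 1) : x - x⁻¹ ≠ 0 := by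
  intro h
  apply hx
  field_simp at h
  linear_combination h

lemma qbracket_ne_zero {q x : 𝕜} (hq : q - q⁻¹ ≠ 0) (hx0 : x ≠ 0) (hx : x ^ 2 ≠ 1) :
    qbracket q x ≠ 0 :=
  div_ne_zero (sub_inv_ne_zero_of_sq_ne_one hx0 hx) hq

lemma qbracket_self {q : 𝕜} (hq : q - q⁻¹ ≠ 0) : qbracket q q = 1 := div_self hq

lemma qbracket_mul_sub_mul_qbracket (q x y : 𝕜) :
    qbracket q (x * y) - y * qbracket q x = x⁻¹ * qbracket q y := by
  simp only [qbracket, mul_inv]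
  ring

lemma qbracket_mul_mul_qbracket_div (q t : 𝕜) {y : 𝕜} (hy : y ≠ 0) :
    qbracket q (y * q) * qbracket q (t / y)
      = qbracket q t + qbracket q y * qbracket q (t / (y * q)) := by
  simp only [qbracket]
  field_simp
  ring

end QBracket

lemma mul_prod_Icc_shift {M : Type*} [CommMonoid M] (f : ℕ → M) (k : ℕ) :
    f 1 * ∏ i ∈ Icc 1 k, f (i + 1) = (∏ i ∈ Icc 1 k, f i) * f (k + 1) := by
  induction k with
  | zero => simp
  | succ k ih => rw [prod_Icc_succ_top (by omega), prod_Icc_succ_top (by omega), ← mul_assoc, ih]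

section Regroup

variable {R V : Type*} [Semiring R] [AddCommMonoid V] [Module R V]

lemma sum_range_smul_regroup (c d : ℕ → R) (Z Y : ℕ → V) (h0 : Z 0 = Y 0)
    (hsucc : ∀ k, Z (k + 1) = Y (k + 1) + d k • Y k) (n : ℕ) :
    ∑ k ∈ range (n + 2), c k • Z k
      = ∑ k ∈ range (n + 1), (c k + c (k + 1) * d k) • Y k + c (n + 1) • Y (n + 1) := by
  induction n with
  | zero =>
    simp only [sum_range_succ, range_zero, sum_empty, h0, hsucc, smul_add, add_smul, mul_smul]
    abel
  | succ n ih =>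
    rw [sum_range_succ, ih, hsucc, sum_range_succ _ (n + 1)]
    simp only [smul_add, add_smul, mul_smul]
    abel

end Regroup

section Operators

variable {𝕜 M : Type*} [Field 𝕜] [AddCommGroup M] [Module 𝕜 M]

lemma apply_eq_inv_smul_of_mul_eq_one {K K' : Module.End 𝕜 M} (h : K' * K = 1) {v : M} {t : 𝕜}
    (ht : t ≠ 0) (hv : K v = t • v) : K' v = t⁻¹ • v := by
  have h' : K' (K v) = v := congr($h v)
  rw [hv, map_smul] at h'
  exact (eq_inv_smul_iff₀ ht).mpr h'

lemma apply_pow_apply_eq_smul {K E : Module.End 𝕜 M} {c : 𝕜} (h : K * E = c • (E * K)) {v : M}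
    {t : 𝕜} (hv : K v = t • v) (k : ℕ) : K ((E ^ k) v) = (c ^ k * t) • (E ^ k) v := by
  induction k with
  | zero => simpa using hv
  | succ k ih =>
    have hKE : K (E ((E ^ k) v)) = c • E (K ((E ^ k) v)) := congr($h ((E ^ k) v))
    rw [pow_succ', Module.End.mul_apply, hKE, ih, map_smul, smul_smul, pow_succ]
    ring_nf

variable {E F K K' : Module.End 𝕜 M} {q : 𝕜}

lemma apply_apply_eq_add_qbracket_smul (hK'K : K' * K = 1)
    (hEF : E * F - F * E = (q - q⁻¹)⁻¹ • (K - K')) {v : M} {t : 𝕜} (ht : t ≠ 0)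
    (hv : K v = t • v) : E (F v) = F (E v) + qbracket q t • v := by
  have h : E (F v) - F (E v) = (q - q⁻¹)⁻¹ • (K v - K' v) := congr($hEF v)
  rw [hv, apply_eq_inv_smul_of_mul_eq_one hK'K ht hv, ← sub_smul, smul_smul] at h
  rw [← sub_eq_iff_eq_add', h, qbracket, div_eq_inv_mul]

lemma apply_pow_succ_apply_eq_add_smul (hq : q - q⁻¹ ≠ 0) (hK'K : K' * K = 1)
    (hKF : K * F = (q⁻¹ ^ 2) • (F * K)) (hEF : E * F - F * E = (q - q⁻¹)⁻¹ • (K - K'))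
    (k : ℕ) {v : M} {t : 𝕜} (ht : t ≠ 0) (hv : K v = t • v) :
    E ((F ^ (k + 1)) v)
      = (F ^ (k + 1)) (E v) + (qbracket q (q ^ (k + 1)) * qbracket q (t / q ^ k)) • (F ^ k) v := by
  have hq0 : q ≠ 0 := by rintro rfl; simp at hq
  induction k generalizing v t with
  | zero => simp [apply_apply_eq_add_qbracket_smul hK'K hEF ht hv, qbracket_self hq]
  | succ k ih =>
    have hFv : K (F v) = (q⁻¹ ^ 2 * t) • F v := by
      simpa using apply_pow_apply_eq_smul hKF hv 1
    have hcoeff : qbracket q t + qbracket q (q ^ (k + 1)) * qbracket q (q⁻¹ ^ 2 * t / q ^ k)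
        = qbracket q (q ^ (k + 1 + 1)) * qbracket q (t / q ^ (k + 1)) := by
      rw [pow_succ q (k + 1), qbracket_mul_mul_qbracket_div q t (pow_ne_zero (k + 1) hq0)]
      congr 3
      field_simp
      ring
    rw [pow_succ, Module.End.mul_apply, ih (by positivity) hFv,
      apply_apply_eq_add_qbracket_smul hK'K hEF ht hv, map_add, map_smul, ← hcoeff]
    simp only [pow_succ (M := Module.End 𝕜 M), Module.End.mul_apply, add_smul]
    abel

end Operators

section QNumbers

variable (q : ℂ)

lemma qpow_ne_zero (z : ℂ) : qpow q z ≠ 0 := Complex.exp_ne_zero _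

lemma qpow_add (x y : ℂ) : qpow q (x + y) = qpow q x * qpow q y := by
  simp only [qpow, add_mul, Complex.exp_add]

lemma qpow_neg (x : ℂ) : qpow q (-x) = (qpow q x)⁻¹ := by
  simp only [qpow, neg_mul, Complex.exp_neg]

lemma qpow_natCast {q : ℂ} (hq : q ≠ 0) (n : ℕ) : qpow q n = q ^ n := by
  rw [qpow, ← Complex.exp_log hq, ← Complex.exp_nat_mul, Complex.exp_log hq]

lemma qnum_eq_qbracket (z : ℂ) : qnum q z = qbracket q (qpow q z) := by
  simp only [qnum, qbracket, qpow, neg_mul, Complex.exp_neg]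

lemma qnum_natCast_ne_zero {q : ℂ} (hq0 : q ≠ 0) (hq : ∀ n : ℕ, 0 < n → q ^ n ≠ 1) {n : ℕ}
    (hn : 0 < n) : qnum q n ≠ 0 := by
  rw [qnum_eq_qbracket, qpow_natCast hq0]
  refine qbracket_ne_zero ?_ (pow_ne_zero n hq0) ?_
  · exact sub_inv_ne_zero_of_sq_ne_one hq0 (hq 2 two_pos)
  · rw [← pow_mul]
    exact hq (n * 2) (by positivity)

lemma qnum_add_sub_qpow_mul_qnum (x y : ℂ) :
    qnum q (x + y) - qpow q y * qnum q x = qpow q (-x) * qnum q y := by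
  rw [qnum_eq_qbracket, qnum_eq_qbracket, qnum_eq_qbracket, qpow_add, qpow_neg]
  exact qbracket_mul_sub_mul_qbracket q _ _

end QNumbers

section Coefficients

noncomputable def projCoeff (q : ℂ) (k : ℕ) (s b : ℂ) : ℂ :=
  ((-1 : ℂ) ^ k * qpow q (k * (s - 1))) /
    ((∏ i ∈ Icc 1 k, qnum q i) * (∏ i ∈ Icc 1 k, qnum q (b + s + i)))

lemma truncProj_eq_sum_projCoeff (q : ℂ) {M : Type*} [AddCommGroup M] [Module ℂ M]
    (E F : Module.End ℂ M) (m : ℕ) (s b : ℂ) (w : M) :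
    truncProj q E F m s b w = ∑ k ∈ range (m + 1), projCoeff q k s b • (F ^ k) ((E ^ k) w) :=
  rfl

variable (q : ℂ)

lemma projCoeff_succ (k : ℕ) (s b : ℂ) :
    projCoeff q (k + 1) s b
      = projCoeff q k s b * (-qpow q (s - 1) / (qnum q ↑(k + 1) * qnum q (b + s + ↑(k + 1)))) := by
  have hpow : qpow q (↑(k + 1) * (s - 1)) = qpow q (k * (s - 1)) * qpow q (s - 1) := by
    rw [← qpow_add]; push_cast; ring_nf
  rw [projCoeff, projCoeff, prod_Icc_succ_top (by omega), prod_Icc_succ_top (by omega), hpow]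
  ring

lemma projCoeff_sub_one_add_two {q : ℂ} (hq : q ≠ 0) (k : ℕ) (s b : ℂ)
    (hb : qnum q (b + s + 1) ≠ 0) :
    projCoeff q k (s - 1) (b + 2)
      = projCoeff q k s b * (q ^ k)⁻¹ * (qnum q (b + s + 1) / qnum q (b + s + ↑(k + 1))) := by
  have hprod : ∏ i ∈ Icc 1 k, qnum q (b + 2 + (s - 1) + i)
      = (∏ i ∈ Icc 1 k, qnum q (b + s + i)) * qnum q (b + s + ↑(k + 1)) / qnum q (b + s + 1) := by
    rw [eq_div_iff hb, mul_comm, ← mul_prod_Icc_shift (fun i : ℕ => qnum q (b + s + i))]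
    push_cast
    ring_nf
  have hpow : qpow q (k * (s - 1 - 1)) = qpow q (k * (s - 1)) * (q ^ k)⁻¹ := by
    rw [← qpow_natCast hq, ← qpow_neg, ← qpow_add]; ring_nf
  rw [projCoeff, projCoeff, hprod, hpow]
  field_simp

lemma projCoeff_add_projCoeff_succ_mul {q : ℂ} (hq0 : q ≠ 0) (hq : ∀ n : ℕ, 0 < n → q ^ n ≠ 1)
    (j : ℕ) (s a : ℂ) (ha : qnum q (a + s + 1) ≠ 0) (haj : qnum q (a + s + ↑(j + 1)) ≠ 0) :
    projCoeff q j s a + projCoeff q (j + 1) s a * (qnum q ↑(j + 1) * qnum q (a + ↑(j + 2)))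
      = qpow q (-a - 2) * qnum q (s - 1) / qnum q (a + s + 1) * projCoeff q j (s - 1) (a + 2) := by
  have hcore := qnum_add_sub_qpow_mul_qnum q (a + ↑(j + 2)) (s - 1)
  rw [show a + ↑(j + 2) + (s - 1) = a + s + ↑(j + 1) by push_cast; ring] at hcore
  have hpow : qpow q (-(a + ↑(j + 2))) * q ^ j = qpow q (-a - 2) := by
    rw [← qpow_natCast hq0, ← qpow_add]; push_cast; ring_nf
  have hj : qnum q ↑(j + 1) ≠ 0 := qnum_natCast_ne_zero hq0 hq (Nat.succ_pos j)
  rw [projCoeff_succ, projCoeff_sub_one_add_two hq0 j s a ha]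
  field_simp
  linear_combination projCoeff q j s a * (q ^ j * hcore + qnum q (s - 1) * hpow)

end Coefficients

theorem truncated_projector_recursion_general (q a s : ℂ) (hq0 : q ≠ 0)
    (hq : ∀ n : ℕ, 0 < n → q ^ n ≠ 1)
    (M : Type*) [AddCommGroup M] [Module ℂ M]
    (E F K K' : Module.End ℂ M)
    (hK'K : K' * K = 1)
    (hKE : K * E = (q ^ 2) • (E * K))
    (hKF : K * F = (q⁻¹ ^ 2) • (F * K))
    (hEF : E * F - F * E = ((q - q⁻¹)⁻¹) • (K - K'))
    (w : M) (hw : K w = (qpow q a) • w)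
    (m : ℕ) (hm : 1 ≤ m)
    (hden : ∀ i : ℕ, 1 ≤ i → i ≤ m → qnum q (a + s + i) ≠ 0) :
    E (truncProj q E F m s a w)
      = (qpow q (-a - 2) * qnum q (s - 1) / qnum q (a + s + 1)) •
          truncProj q E F (m - 1) (s - 1) (a + 2) (E w)
        + (((-1 : ℂ) ^ m * qpow q (m * (s - 1))) /
            ((∏ i ∈ Finset.Icc 1 m, qnum q i) *
             (∏ i ∈ Finset.Icc 1 m, qnum q (a + s + i)))) •
            ((F ^ m) ((E ^ (m + 1)) w)) := by
  obtain ⟨n, rfl⟩ := Nat.exists_eq_add_of_le' hm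
  have hqq : q - q⁻¹ ≠ 0 := sub_inv_ne_zero_of_sq_ne_one hq0 (hq 2 two_pos)
  have hEw (k : ℕ) : K ((E ^ k) w) = ((q ^ 2) ^ k * qpow q a) • (E ^ k) w :=
    apply_pow_apply_eq_smul hKE hw k
  have hstep (j : ℕ) : E ((F ^ (j + 1)) ((E ^ (j + 1)) w))
      = (F ^ (j + 1)) ((E ^ (j + 1 + 1)) w)
        + (qnum q ↑(j + 1) * qnum q (a + ↑(j + 2))) • (F ^ j) ((E ^ (j + 1)) w) := by
    rw [apply_pow_succ_apply_eq_add_smul hqq hK'K hKF hEF j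
      (mul_ne_zero (by positivity) (qpow_ne_zero q a)) (hEw (j + 1)),
      qnum_eq_qbracket, qnum_eq_qbracket, qpow_add, qpow_natCast hq0, qpow_natCast hq0,
      pow_succ' E (j + 1), Module.End.mul_apply]
    congr 4
    generalize qpow q a = t
    field_simp
    ring
  rw [truncProj_eq_sum_projCoeff, map_sum, truncProj_eq_sum_projCoeff, Nat.add_sub_cancel,
    smul_sum]
  simp only [map_smul]
  rw [sum_range_smul_regroup _ _ _ (fun k => (F ^ k) ((E ^ (k + 1)) w)) (by simp) hstep]
  congr 1
  refine sum_congr rfl fun j hj => ?_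
  rw [mem_range] at hj
  rw [projCoeff_add_projCoeff_succ_mul hq0 hq j s a (by exact_mod_cast hden 1 le_rfl (by omega))
    (hden (j + 1) (by omega) (by omega)), mul_smul, pow_succ, Module.End.mul_apply]

/-- the truncated sl₂ projector satisfies the recursion
`e p_m(s) = (q^{-h-2}[s-1]_q/[h+s-1]_q) p_{m-1}(s-1) e
  + f^m e^{m+1} (-1)^m q^{m(s-1)}/([m]_q! ∏_{i=1}^m [h+s+i]_q)`,
as operators on any weight vector (here of `h`-eigenvalue `a`; the recursion is
evaluated with the Cartan elements acting on the appropriate weight spaces)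
where all Cartan denominators are invertible. -/
theorem truncated_projector_recursion (q a s : ℂ) (hq0 : q ≠ 0)
    (hq : ∀ n : ℕ, 0 < n → q ^ n ≠ 1)
    (M : Type*) [AddCommGroup M] [Module ℂ M]
    (E F K K' : Module.End ℂ M)
    (hKK' : K * K' = 1) (hK'K : K' * K = 1)
    (hKE : K * E = (q ^ 2) • (E * K))
    (hKF : K * F = (q⁻¹ ^ 2) • (F * K))
    (hEF : E * F - F * E = ((q - q⁻¹)⁻¹) • (K - K'))
    (w : M) (hw : K w = (qpow q a) • w)
    (m : ℕ) (hm : 1 ≤ m)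
    (hden : ∀ i : ℕ, 1 ≤ i → i ≤ m → qnum q (a + s + i) ≠ 0)
    (hden' : qnum q (a + s + 1) ≠ 0) :
    E (truncProj q E F m s a w)
      = (qpow q (-a - 2) * qnum q (s - 1) / qnum q (a + s + 1)) •
          truncProj q E F (m - 1) (s - 1) (a + 2) (E w)
        + (((-1 : ℂ) ^ m * qpow q (m * (s - 1))) /
            ((∏ i ∈ Finset.Icc 1 m, qnum q i) *
             (∏ i ∈ Finset.Icc 1 m, qnum q (a + s + i)))) •
            ((F ^ m) ((E ^ (m + 1)) w)) :=
  truncated_projector_recursion_general q a s hq0 hq M E F K K' hK'K hKE hKF hEF w hw m hm hden
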